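/- For every m ≥ 2 and r ≥ 1, the factor monoid M(w_{m,r}) of the word w_{m,r} = x^{m−1} t₁ x^{m−1} t₂ ⋯ t_r x^{m−1} satisfies the identity x^{m+1} ≈ x^m and the identity x^m t ≈ t x^m. -/

import Mathlib

/-!
Every nonempty factor `u` of `w = w_{m,r}` has `u^m = 0` in `M(w)`: if `u` contains some `tᵢ`,
then `u^m` contains it `m ≥ 2` times while `w` contains it once; otherwise `u = x^k` with
`k ≥ 1`, and `u^m` contains `x^m`, longer than every run of `x` in `w`. Hence `a^m ∈ {1, 0}` for
every `a ∈ M(w)`, and since `0` is absorbing both identities hold. (In `wmr`, `x` is the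
letter `0` and `tᵢ` the letter `i`.)
-/

abbrev Word := List ℕ

def subst (φ : ℕ → Word) (w : Word) : Word := w.flatMap φ

inductive Deduce (S : Set (Word × Word)) : Word → Word → Prop
  | refl (w : Word) : Deduce S w w
  | symm {u v : Word} : Deduce S u v → Deduce S v u
  | trans {u v w : Word} : Deduce S u v → Deduce S v w → Deduce S u w
  | step (a b : Word) (φ : ℕ → Word) {s t : Word} (h : (s, t) ∈ S) :
      Deduce S (a ++ subst φ s ++ b) (a ++ subst φ t ++ b)

def FM (w : Word) : Type := Option {u : Word // u <:+: w}

def fmul {w : Word} : FM w → FM w → FM w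
  | some u, some v =>
      if h : (u.1 ++ v.1) <:+: w then some ⟨u.1 ++ v.1, h⟩ else none
  | _, _ => none

def fone (w : Word) : FM w := some ⟨[], List.nil_infix⟩

theorem fmul_none_left {w : Word} (a : FM w) : fmul none a = none := rfl

theorem fmul_none_right {w : Word} (a : FM w) : fmul a none = none := by
  rcases a with _ | u <;> rfl

theorem fmul_some {w : Word} (u v : {u : Word // u <:+: w}) :
    fmul (some u) (some v) =
      if h : (u.1 ++ v.1) <:+: w then some ⟨u.1 ++ v.1, h⟩ else none := rfl

theorem fmul_assoc {w : Word} (a b c : FM w) : fmul (fmul a b) c = fmul a (fmul b c) := by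
  rcases a with _ | u
  · rfl
  rcases b with _ | v
  · rfl
  rcases c with _ | t
  · rw [fmul_none_right]; rfl
  rw [fmul_some, fmul_some]
  by_cases h : (u.1 ++ v.1 ++ t.1) <:+: w
  · have h1 : (u.1 ++ v.1) <:+: w := List.IsInfix.trans ⟨[], t.1, by simp⟩ h
    have h2 : (v.1 ++ t.1) <:+: w := List.IsInfix.trans ⟨u.1, [], by simp⟩ h
    rw [dif_pos h1, fmul_some, dif_pos h2, fmul_some, dif_pos h,
      dif_pos (show (u.1 ++ (v.1 ++ t.1)) <:+: w by simpa [List.append_assoc] using h)]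
    simp [List.append_assoc]; rfl
  · by_cases h1 : (u.1 ++ v.1) <:+: w
    · rw [dif_pos h1, fmul_some, dif_neg h]
      by_cases h2 : (v.1 ++ t.1) <:+: w
      · rw [dif_pos h2, fmul_some,
          dif_neg (fun hh => h (by simpa [List.append_assoc] using hh))]
      · rw [dif_neg h2]; rfl
    · rw [dif_neg h1]
      change (none : FM w) = _
      by_cases h2 : (v.1 ++ t.1) <:+: w
      · rw [dif_pos h2, fmul_some,
          dif_neg (fun hh => h1 (List.IsInfix.trans ⟨[], t.1, by simp⟩ hh))]
      · rw [dif_neg h2]; rfl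

instance (w : Word) : Monoid (FM w) where
  mul := fmul
  one := fone w
  mul_assoc := fmul_assoc
  one_mul := by
    rintro (_ | u)
    · rfl
    · show fmul (fone w) (some u) = some u
      rw [fone, fmul_some, dif_pos (by simpa using u.2)]
      simp; rfl
  mul_one := by
    rintro (_ | u)
    · rfl
    · show fmul (some u) (fone w) = some u
      rw [fone, fmul_some, dif_pos (by simpa using u.2)]
      simp; rfl

def SatId (M : Type) [Monoid M] (p : Word × Word) : Prop :=
  ∀ φ : ℕ → M, (p.1.map φ).prod = (p.2.map φ).prod

def VSat (E : Set (Word × Word)) (p : Word × Word) : Prop :=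
  ∀ (M : Type) [Monoid M], (∀ q ∈ E, SatId M q) → SatId M p

def ids0 : Set (Word × Word) :=
  {([0,1,2,0,3,1],[1,0,2,0,3,1]), ([0,2,0,1,3,1],[0,2,1,0,3,1]), ([0,2,1,3,0,1],[0,2,1,3,1,0])}

def idA (n : ℕ) : Word × Word :=
  (List.replicate n 0 ++ (List.range n).map (· + 1),
   ((List.range n).map (fun i => [i + 1, 0])).flatten)

def rigid (e₀ : ℕ) (es : List ℕ) : Word :=
  List.replicate e₀ 0 ++ (es.zipIdx.map (fun p => (p.2 + 1) :: List.replicate p.1 0)).flatten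

def Bword (n i : ℕ) : Word := List.replicate i 0 ++ 1 :: List.replicate (n - 1 - i) 0

def wmr (m r : ℕ) : Word := rigid (m - 1) (List.replicate r (m - 1))

section PowEqOneOrZero

variable {M : Type} [MonoidWithZero M] {m : ℕ}

theorem satId_pow_succ_of_forall_eq_one_or_pow_eq_zero (h : ∀ a : M, a = 1 ∨ a ^ m = 0) :
    SatId M (List.replicate (m + 1) 0, List.replicate m 0) := by
  intro φ
  simp only [List.map_replicate, List.prod_replicate]
  rcases h (φ 0) with h1 | hpow
  · simp [h1]
  · rw [pow_succ, hpow, zero_mul]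

theorem satId_pow_mul_comm_of_forall_eq_one_or_pow_eq_zero (h : ∀ a : M, a = 1 ∨ a ^ m = 0) :
    SatId M (List.replicate m 0 ++ [1], 1 :: List.replicate m 0) := by
  intro φ
  simp only [List.map_append, List.map_replicate, List.map_cons, List.map_nil,
    List.prod_append, List.prod_replicate, List.prod_cons, List.prod_nil, mul_one]
  rcases h (φ 0) with h1 | hpow
  · simp [h1]
  · rw [hpow, zero_mul, mul_zero]

end PowEqOneOrZero

namespace FM

variable {w : Word}

instance : MonoidWithZero (FM w) where
  zero := none
  zero_mul _ := rfl
  mul_zero := fmul_none_right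

def ofFactor (u : {u : Word // u <:+: w}) : FM w := some u

theorem ofFactor_mul (u v : {u : Word // u <:+: w}) :
    ofFactor u * ofFactor v = if h : u.1 ++ v.1 <:+: w then ofFactor ⟨_, h⟩ else 0 :=
  fmul_some u v

theorem ofFactor_pow (u : {u : Word // u <:+: w}) (n : ℕ) :
    ofFactor u ^ n =
      if h : (List.replicate n u.1).flatten <:+: w then ofFactor ⟨_, h⟩ else 0 := by
  induction n with
  | zero =>
    rw [List.replicate_zero, List.flatten_nil, dif_pos List.nil_infix]
    rfl
  | succ n ih =>
    have hflat : (List.replicate (n + 1) u.1).flatten = u.1 ++ (List.replicate n u.1).flatten := by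
      rw [List.replicate_succ, List.flatten_cons]
    rw [pow_succ', ih]
    by_cases hn : (List.replicate n u.1).flatten <:+: w
    · rw [dif_pos hn, ofFactor_mul]
      simp only [hflat]
    · rw [dif_neg hn, dif_neg fun h => hn (List.infix_append_right.trans (hflat ▸ h)), mul_zero]

theorem eq_one_or_pow_eq_zero {n : ℕ} (hn : n ≠ 0)
    (hw : ∀ u : Word, u ≠ [] → ¬ (List.replicate n u).flatten <:+: w) (a : FM w) :
    a = 1 ∨ a ^ n = 0 := by
  rcases a with _ | ⟨_ | ⟨c, u⟩, _⟩
  · exact Or.inr (zero_pow hn)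
  · exact Or.inl rfl
  · exact Or.inr ((ofFactor_pow _ n).trans (dif_neg (hw _ (List.cons_ne_nil c u))))

end FM

theorem List.infix_append_cons_of_not_mem {α : Type*} {l A B : List α} {c : α} (hc : c ∉ l)
    (h : l <:+: A ++ c :: B) : l <:+: A ∨ l <:+: B := by
  rcases List.infix_append_iff.mp h with hA | hcB | ⟨l₁, l₂, rfl, hl₁, hl₂⟩
  · exact Or.inl hA
  · rcases List.infix_cons_iff.mp hcB with ⟨t, ht⟩ | hB
    · cases l with
      | nil => exact Or.inl List.nil_infix
      | cons a l => exact absurd (by simp_all) hc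
    · exact Or.inr hB
  · cases l₂ with
    | nil => exact Or.inl (by simpa using hl₁.isInfix)
    | cons a l₂ => exact absurd (by obtain ⟨t, ht⟩ := hl₂; simp_all) hc

section Rigid

variable (e₀ : ℕ) (es : List ℕ)

theorem rigid_append_singleton (e : ℕ) :
    rigid e₀ (es ++ [e]) = rigid e₀ es ++ (es.length + 1) :: List.replicate e 0 := by
  simp [rigid, List.zipIdx_append]

theorem filter_ne_zero_rigid : (rigid e₀ es).filter (· ≠ 0) = List.range' 1 es.length := by
  induction es using List.reverseRecOn with
  | nil => simp [rigid]
  | append_singleton es e ih =>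
    rw [rigid_append_singleton, List.filter_append, ih, List.length_append, List.length_singleton,
      List.range'_1_concat, Nat.add_comm 1]
    simp

variable {e₀ es}

theorem count_rigid_le_one {c : ℕ} (hc : c ≠ 0) : (rigid e₀ es).count c ≤ 1 := by
  rw [← List.count_filter (p := (· ≠ 0)) (by simpa using hc), filter_ne_zero_rigid]
  exact List.nodup_iff_count_le_one.mp List.nodup_range' c

theorem not_replicate_infix_rigid {n : ℕ} (h₀ : e₀ < n) (hes : ∀ e ∈ es, e < n) :
    ¬ List.replicate n 0 <:+: rigid e₀ es := by
  induction es using List.reverseRecOn with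
  | nil => simpa [rigid, List.infix_replicate_iff] using h₀
  | append_singleton es e ih =>
    rw [rigid_append_singleton]
    intro h
    rcases List.infix_append_cons_of_not_mem (by simp) h with h | h
    · exact ih (fun e' he' => hes e' (by simp [he'])) h
    · exact (hes e (by simp)).not_ge (by simpa using (List.infix_replicate_iff.mp h).1)

theorem not_flatten_replicate_infix_rigid {n : ℕ} (hn : 2 ≤ n) (h₀ : e₀ < n)
    (hes : ∀ e ∈ es, e < n) {u : Word} (hu : u ≠ []) :
    ¬ (List.replicate n u).flatten <:+: rigid e₀ es := by
  intro h
  by_cases hz : ∃ c ∈ u, c ≠ 0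
  · obtain ⟨c, hcu, hc⟩ := hz
    have : n * u.count c ≤ 1 :=
      calc n * u.count c = (List.replicate n u).flatten.count c := by
            simp [List.count_flatten]
        _ ≤ (rigid e₀ es).count c := h.sublist.count_le c
        _ ≤ 1 := count_rigid_le_one hc
    nlinarith [List.count_pos_iff.mpr hcu]
  · push Not at hz
    rw [List.eq_replicate_iff.mpr ⟨rfl, hz⟩, List.flatten_replicate_replicate] at h
    have hlen : n ≤ n * u.length := Nat.le_mul_of_pos_right n (List.length_pos_iff.mpr hu)
    exact not_replicate_infix_rigid h₀ hes
      ((List.infix_replicate_iff.mpr ⟨by simpa using hlen, by simp⟩).trans h)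

end Rigid

theorem stmt12_general (m r : ℕ) (hm : 2 ≤ m) :
    SatId (FM (wmr m r)) (List.replicate (m + 1) 0, List.replicate m 0) ∧
    SatId (FM (wmr m r)) (List.replicate m 0 ++ [1], 1 :: List.replicate m 0) := by
  have h : ∀ a : FM (wmr m r), a = 1 ∨ a ^ m = 0 :=
    FM.eq_one_or_pow_eq_zero (by omega) fun _ hu =>
      not_flatten_replicate_infix_rigid hm (by omega)
        (fun e he => by rw [List.eq_of_mem_replicate he]; omega) hu
  exact ⟨satId_pow_succ_of_forall_eq_one_or_pow_eq_zero h,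
    satId_pow_mul_comm_of_forall_eq_one_or_pow_eq_zero h⟩

/-- For every `m ≥ 2` and `r ≥ 1`, the factor monoid of
`w_{m,r} = x^{m-1} t₁ x^{m-1} ⋯ t_r x^{m-1}` satisfies `x^{m+1} ≈ x^m` and
`x^m t ≈ t x^m`. -/
theorem stmt12 (m r : ℕ) (hm : 2 ≤ m) (hr : 1 ≤ r) :
    SatId (FM (wmr m r)) (List.replicate (m + 1) 0, List.replicate m 0) ∧
    SatId (FM (wmr m r)) (List.replicate m 0 ++ [1], 1 :: List.replicate m 0) :=
  stmt12_general m r hm
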